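/- arXiv:2208.04812 — 2 statements merged into one kernel-verified Lean document; each statement's English description precedes it below -/
import Mathlib

section
/- Let T be an unbounded quasinormal operator such that Tⁿ is normal for some n ≥ 2. Then T is normal. -/
/-!
By Uchiyama's theorem it suffices to show `ker T† ⊆ ker T`. If `T† x = 0` then `x ⊥ ran Tⁿ`, so
`(Tⁿ)† x = 0`; normality of `Tⁿ` gives `Tⁿ x = 0`, and `ker Tⁿ = ker T` because `ker T² ⊆ ker T`
for quasinormal `T`.

Uchiyama's theorem: by von Neumann, `T†T` and `TT†` are m-accretive, so `(1 + T†T)⁻¹` and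
`(1 + TT†)⁻¹` are bounded. Both send `T x` to `T (1 + T†T)⁻¹ x` (for the first one this is where
quasinormality enters) and both fix `(ran T)ᗮ = ker T† ⊆ ker T`. So they agree on the dense
subspace `ran T ⊕ (ran T)ᗮ`, hence everywhere, and therefore `T†T = TT†`.
-/

open LinearPMap

set_option linter.unusedSectionVars false

noncomputable section

section BanachDefs

variable {H : Type*} [NormedAddCommGroup H] [NormedSpace ℂ H]

/-- Composition `g ∘ f` of unbounded operators, with the natural (maximal) domain
`{x ∈ dom f : f x ∈ dom g}`. -/
def LinearPMap.pComp (g f : H →ₗ.[ℂ] H) : H →ₗ.[ℂ] H where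
  domain := (g.domain.comap f.toFun).map f.domain.subtype
  toFun := g.toFun ∘ₗ (f.toFun.restrict (p := g.domain.comap f.toFun) (q := g.domain)
      (fun _ hx => hx)) ∘ₗ
    ((Submodule.equivMapOfInjective f.domain.subtype (Submodule.injective_subtype _)
      (g.domain.comap f.toFun)).symm).toLinearMap

/-- `n`-th power of an unbounded operator; `T^0` is the identity on all of `H`. -/
def LinearPMap.pPow (T : H →ₗ.[ℂ] H) : ℕ → (H →ₗ.[ℂ] H)
  | 0 => (LinearMap.id : H →ₗ[ℂ] H).toPMap ⊤
  | n + 1 => T.pComp (T.pPow n)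

theorem LinearPMap.pPow_domain_succ_le (T : H →ₗ.[ℂ] H) (n : ℕ) :
    (T.pPow (n + 1)).domain ≤ (T.pPow n).domain := by
  intro x hx
  simp_rw [pPow, pComp] at hx
  obtain ⟨y, -, rfl⟩ := hx
  exact y.2

theorem LinearPMap.pPow_domain_le (T : H →ₗ.[ℂ] H) {i n : ℕ} (h : i ≤ n) :
    (T.pPow n).domain ≤ (T.pPow i).domain := by
  induction n with
  | zero => exact Nat.le_zero.mp h ▸ le_rfl
  | succ n ih =>
    rcases Nat.lt_succ_iff_lt_or_eq.mp (Nat.lt_succ_of_le h) with h' | rfl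
    · exact le_trans (T.pPow_domain_succ_le n) (ih (Nat.lt_succ_iff.mp h'))
    · exact le_rfl

/-- `p(T)` for a complex polynomial `p`, defined on `D(T^n)` where `n = deg p`. -/
def LinearPMap.polyApp (p : Polynomial ℂ) (T : H →ₗ.[ℂ] H) : H →ₗ.[ℂ] H where
  domain := (T.pPow p.natDegree).domain
  toFun := ∑ i ∈ (Finset.range (p.natDegree + 1)).attach,
    p.coeff i.1 • ((T.pPow i.1).toFun ∘ₗ Submodule.inclusion
      (T.pPow_domain_le (Nat.lt_succ_iff.mp (Finset.mem_range.mp i.2))))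

/-- `A - μ • I` with domain `dom A`. -/
def LinearPMap.subConst (A : H →ₗ.[ℂ] H) (μ : ℂ) : H →ₗ.[ℂ] H :=
  ⟨A.domain, A.toFun - μ • A.domain.subtype⟩

/-- An unbounded operator is boundedly invertible if it is bijective from its domain onto `H`
with an everywhere-defined bounded (continuous) inverse. -/
def LinearPMap.IsBddInvertible (A : H →ₗ.[ℂ] H) : Prop :=
  ∃ B : H →L[ℂ] H, (∀ y : H, ∃ hy : B y ∈ A.domain, A ⟨B y, hy⟩ = y) ∧
    ∀ x : A.domain, B (A x) = (x : H)

/-- The spectrum of an unbounded operator: `μ ∉ σ(A)` iff `A - μI` is bijective with a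
bounded everywhere-defined inverse. -/
def LinearPMap.pSpectrum (A : H →ₗ.[ℂ] H) : Set ℂ :=
  {μ | ¬ (A.subConst μ).IsBddInvertible}

/-- The kernel of an unbounded operator, as a subset of `H`. -/
def LinearPMap.pKer (A : H →ₗ.[ℂ] H) : Set H :=
  {x | ∃ hx : x ∈ A.domain, A ⟨x, hx⟩ = 0}

/-- The range of an unbounded operator. -/
def LinearPMap.pRan (A : H →ₗ.[ℂ] H) : Set H :=
  Set.range fun x : A.domain => A x

/-- A bounded everywhere-defined operator seen as an unbounded operator. -/
def ContinuousLinearMap.toPMapTop (B : H →L[ℂ] H) : H →ₗ.[ℂ] H :=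
  (B : H →ₗ[ℂ] H).toPMap ⊤

end BanachDefs

section HilbertDefs

variable {H : Type*} [NormedAddCommGroup H] [InnerProductSpace ℂ H] [CompleteSpace H]

/-- A densely defined closed operator is quasinormal if `T T* T = T* T T`. -/
def LinearPMap.IsQuasinormal (T : H →ₗ.[ℂ] H) : Prop :=
  T.IsClosed ∧ Dense (T.domain : Set H) ∧
    T.pComp (T.adjoint.pComp T) = T.adjoint.pComp (T.pComp T)

/-- A densely defined closed operator is normal if `T* T = T T*` (an equality of unbounded
operators, domains included). -/
def LinearPMap.IsNormal (T : H →ₗ.[ℂ] H) : Prop :=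
  T.IsClosed ∧ Dense (T.domain : Set H) ∧ T.adjoint.pComp T = T.pComp T.adjoint

/-- A symmetric (not necessarily densely defined) operator. -/
def LinearPMap.IsSymm (T : H →ₗ.[ℂ] H) : Prop :=
  ∀ x y : T.domain, inner ℂ (T x) (y : H) = (inner ℂ (x : H) (T y) : ℂ)

/-- A paranormal operator: `‖Tx‖² ≤ ‖T²x‖ ‖x‖` for every `x ∈ D(T²)`. -/
def LinearPMap.IsParanormal (T : H →ₗ.[ℂ] H) : Prop :=
  ∀ (x : H) (hx : x ∈ T.domain) (hTx : T ⟨x, hx⟩ ∈ T.domain),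
    ‖T ⟨x, hx⟩‖ ^ 2 ≤ ‖T ⟨T ⟨x, hx⟩, hTx⟩‖ * ‖x‖

end HilbertDefs

end

open scoped InnerProductSpace

theorem Submodule.dense_sup_orthogonal {𝕜 E : Type*} [RCLike 𝕜] [NormedAddCommGroup E]
    [InnerProductSpace 𝕜 E] [CompleteSpace E] (K : Submodule 𝕜 E) :
    Dense ((K ⊔ Kᗮ : Submodule 𝕜 E) : Set E) := by
  rw [Submodule.dense_iff_topologicalClosure_eq_top, Submodule.topologicalClosure_eq_top_iff,
    ← Submodule.inf_orthogonal]
  exact Kᗮ.inf_orthogonal_eq_bot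

namespace LinearPMap

section Composition

variable {H : Type*} [NormedAddCommGroup H] [NormedSpace ℂ H]

theorem pComp_apply {g f : H →ₗ.[ℂ] H} {x : H} (hx : x ∈ (g.pComp f).domain)
    (hxf : x ∈ f.domain) (hxg : f ⟨x, hxf⟩ ∈ g.domain) :
    g.pComp f ⟨x, hx⟩ = g ⟨f ⟨x, hxf⟩, hxg⟩ := by
  have h : (Submodule.equivMapOfInjective f.domain.subtype (Submodule.injective_subtype _)
      (g.domain.comap f.toFun)).symm ⟨x, hx⟩ = ⟨⟨x, hxf⟩, hxg⟩ := by
    rw [LinearEquiv.symm_apply_eq]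
    rfl
  simp only [pComp, mk_apply, LinearMap.comp_apply, LinearEquiv.coe_coe, h]
  rfl

theorem mem_graph_pComp {g f : H →ₗ.[ℂ] H} {x z : H} :
    (x, z) ∈ (g.pComp f).graph ↔ ∃ y, (x, y) ∈ f.graph ∧ (y, z) ∈ g.graph := by
  simp only [mem_graph_iff, Subtype.exists]
  constructor
  · rintro ⟨x, hx, rfl, rfl⟩
    obtain ⟨⟨x, hxf⟩, hxg, rfl⟩ := Submodule.mem_map.mp hx
    exact ⟨f ⟨x, hxf⟩, ⟨x, hxf, rfl, rfl⟩, ⟨_, hxg, rfl, (pComp_apply _ hxf hxg).symm⟩⟩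
  · rintro ⟨_, ⟨x, hxf, rfl, rfl⟩, ⟨_, hxg, rfl, rfl⟩⟩
    exact ⟨x, Submodule.mem_map.mpr ⟨⟨x, hxf⟩, hxg, rfl⟩, rfl, pComp_apply _ hxf hxg⟩

theorem pPow_one (T : H →ₗ.[ℂ] H) : T.pPow 1 = T := by
  refine eq_of_eq_graph (Submodule.ext fun ⟨x, z⟩ => ?_)
  rw [pPow, mem_graph_pComp]
  simp [pPow]

theorem mem_pKer_iff {A : H →ₗ.[ℂ] H} {x : H} : x ∈ A.pKer ↔ (x, 0) ∈ A.graph := by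
  simp [pKer]

theorem pKer_pComp_pComp_subset {T : H →ₗ.[ℂ] H} (hT : (T.pComp T).pKer ⊆ T.pKer)
    (S : H →ₗ.[ℂ] H) : (T.pComp (T.pComp S)).pKer ⊆ (T.pComp S).pKer := by
  intro x hx
  simp only [mem_pKer_iff, mem_graph_pComp] at hx ⊢
  obtain ⟨_, ⟨y, hxy, hy⟩, hz⟩ := hx
  exact ⟨y, hxy, mem_pKer_iff.mp (hT (mem_pKer_iff.mpr (mem_graph_pComp.mpr ⟨_, hy, hz⟩)))⟩

theorem pKer_pPow_subset {T : H →ₗ.[ℂ] H} (hT : (T.pComp T).pKer ⊆ T.pKer) (n : ℕ) :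
    (T.pPow (n + 1)).pKer ⊆ T.pKer := by
  induction n with
  | zero => rw [pPow_one]
  | succ n ih => exact (pKer_pComp_pComp_subset hT _).trans ih

end Composition

section InnerProduct

variable {𝕜 E F : Type*} [RCLike 𝕜] [NormedAddCommGroup E] [InnerProductSpace 𝕜 E]
  [NormedAddCommGroup F] [InnerProductSpace 𝕜 F]

theorem IsFormalAdjoint.inner_eq_of_mem_graph {B : F →ₗ.[𝕜] E} {A : E →ₗ.[𝕜] F}
    (hBA : B.IsFormalAdjoint A) {u : F} {v x : E} {y : F} (huv : (u, v) ∈ B.graph)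
    (hxy : (x, y) ∈ A.graph) : ⟪v, x⟫_𝕜 = ⟪u, y⟫_𝕜 := by
  obtain ⟨u, rfl, rfl⟩ := (mem_graph_iff B).mp huv
  obtain ⟨x, rfl, rfl⟩ := (mem_graph_iff A).mp hxy
  exact hBA u x

section Adjoint

variable [CompleteSpace E] {T : E →ₗ.[𝕜] F}

theorem zero_mem_adjoint_graph_iff (hd : Dense (T.domain : Set E)) {w : F} :
    (w, 0) ∈ T†.graph ↔ ∀ x y, (x, y) ∈ T.graph → ⟪y, w⟫_𝕜 = 0 := by
  simp [adjoint_graph_eq_graph_adjoint hd, Submodule.mem_adjoint_iff]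

/-- Von Neumann's orthogonal decomposition `F × E = {(T x, -x)} ⊕ graph T†`. -/
theorem exists_mem_graph_mem_adjoint_graph [CompleteSpace F] (hc : T.IsClosed)
    (hd : Dense (T.domain : Set E)) (a : F) (b : E) :
    ∃ x y z w, (x, y) ∈ T.graph ∧ (z, w) ∈ T†.graph ∧ y + z = a ∧ w - x = b := by
  set L := (LinearEquiv.skewSwap 𝕜 F E).symm.trans (WithLp.linearEquiv 2 𝕜 (F × E)).symm
  set K := T.graph.map L.toLinearMap
  have hK : _root_.IsClosed (K : Set (WithLp 2 (F × E))) := by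
    rw [Submodule.map_coe, LinearEquiv.coe_coe, LinearEquiv.image_eq_preimage_symm]
    refine hc.preimage ?_
    have hL : ⇑L.symm = fun p => (-p.snd, p.fst) := rfl
    rw [hL]
    fun_prop
  have : CompleteSpace K := hK.completeSpace_coe
  obtain ⟨k, ⟨⟨x, y⟩, hxy, rfl⟩, v, hv, hkv⟩ :=
    K.exists_add_mem_mem_orthogonal (WithLp.toLp 2 (a, b))
  have hv' : (v.fst, v.snd) ∈ T†.graph := by
    rw [adjoint_graph_eq_graph_adjoint hd]
    exact ⟨v, hv, rfl⟩
  refine ⟨x, y, v.fst, v.snd, hxy, hv', ?_, ?_⟩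
  · simpa [L] using (congrArg WithLp.fst hkv).symm
  · simpa [L, neg_add_eq_sub] using (congrArg WithLp.snd hkv).symm

end Adjoint

def IsMAccretive (S : E →ₗ.[𝕜] E) : Prop :=
  (∀ x y, (x, y) ∈ S.graph → 0 ≤ RCLike.re ⟪y, x⟫_𝕜) ∧ ∀ h, ∃ x, (x, h - x) ∈ S.graph

namespace IsMAccretive

variable {S : E →ₗ.[𝕜] E}

theorem norm_le_norm_add (hS : S.IsMAccretive) {x y : E} (hxy : (x, y) ∈ S.graph) :
    ‖x‖ ≤ ‖x + y‖ := by
  have hre : ‖x‖ ^ 2 ≤ RCLike.re ⟪x + y, x⟫_𝕜 := by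
    rw [inner_add_left, RCLike.re.map_add, inner_self_eq_norm_sq]
    linarith [hS.1 x y hxy]
  have := re_inner_le_norm (𝕜 := 𝕜) (x + y) x
  nlinarith [norm_nonneg x, norm_nonneg (x + y)]

theorem eq_of_mem_graph (hS : S.IsMAccretive) {h x x' : E} (hx : (x, h - x) ∈ S.graph)
    (hx' : (x', h - x') ∈ S.graph) : x = x' := by
  have hmem : (x - x', (h - x) - (h - x')) ∈ S.graph := S.graph.sub_mem hx hx'
  have h0 := hS.norm_le_norm_add hmem
  rw [show x - x' + (h - x - (h - x')) = 0 by abel, norm_zero, norm_le_zero_iff] at h0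
  exact sub_eq_zero.mp h0

noncomputable def oneAddInv (hS : S.IsMAccretive) : E →L[𝕜] E :=
  LinearMap.mkContinuous
    { toFun h := (hS.2 h).choose
      map_add' a b := by
        refine hS.eq_of_mem_graph (hS.2 (a + b)).choose_spec ?_
        have := S.graph.add_mem (hS.2 a).choose_spec (hS.2 b).choose_spec
        rw [Prod.mk_add_mk] at this
        convert this using 2
        abel
      map_smul' c a := by
        refine hS.eq_of_mem_graph (hS.2 (c • a)).choose_spec ?_
        have := S.graph.smul_mem c (hS.2 a).choose_spec
        rw [Prod.smul_mk, smul_sub] at this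
        exact this }
    1 fun h => by simpa using hS.norm_le_norm_add (hS.2 h).choose_spec

theorem oneAddInv_eq_iff (hS : S.IsMAccretive) {h x : E} :
    hS.oneAddInv h = x ↔ (x, h - x) ∈ S.graph := by
  have hspec : (hS.oneAddInv h, h - hS.oneAddInv h) ∈ S.graph := (hS.2 h).choose_spec
  exact ⟨fun hx => hx ▸ hspec, hS.eq_of_mem_graph hspec⟩

theorem oneAddInv_eq_self (hS : S.IsMAccretive) {w : E} (hw : (w, 0) ∈ S.graph) :
    hS.oneAddInv w = w :=
  hS.oneAddInv_eq_iff.mpr (by rwa [sub_self])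

end IsMAccretive

end InnerProduct

section Hilbert

variable {H : Type*} [NormedAddCommGroup H] [InnerProductSpace ℂ H]

theorem IsFormalAdjoint.re_inner_nonneg_of_mem_graph_pComp {A B : H →ₗ.[ℂ] H}
    (hBA : B.IsFormalAdjoint A) {x y : H} (hxy : (x, y) ∈ (B.pComp A).graph) :
    0 ≤ RCLike.re ⟪y, x⟫_ℂ := by
  obtain ⟨u, hxu, huy⟩ := mem_graph_pComp.mp hxy
  rw [hBA.inner_eq_of_mem_graph huy hxu]
  exact inner_self_nonneg

variable [CompleteSpace H] {T : H →ₗ.[ℂ] H}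

theorem mem_pKer_adjoint_iff (hd : Dense (T.domain : Set H)) {w : H} :
    w ∈ T†.pKer ↔ ∀ x y, (x, y) ∈ T.graph → ⟪y, w⟫_ℂ = 0 := by
  rw [mem_pKer_iff, zero_mem_adjoint_graph_iff hd]

theorem orthogonal_range_subset_pKer_adjoint (hd : Dense (T.domain : Set H)) :
    ((LinearMap.range T.toFun)ᗮ : Set H) ⊆ T†.pKer := by
  intro w hw
  rw [mem_pKer_adjoint_iff hd]
  rintro _ _ hxy
  obtain ⟨x, -, rfl⟩ := (mem_graph_iff T).mp hxy
  exact (Submodule.mem_orthogonal _ w).mp hw _ ⟨x, rfl⟩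

theorem pKer_adjoint_subset_pKer_adjoint_pComp (hd : Dense (T.domain : Set H)) {S : H →ₗ.[ℂ] H}
    (hd' : Dense ((T.pComp S).domain : Set H)) : T†.pKer ⊆ (T.pComp S)†.pKer := by
  intro w hw
  rw [mem_pKer_adjoint_iff hd] at hw
  rw [mem_pKer_adjoint_iff hd']
  intro x z hxz
  obtain ⟨y, -, hyz⟩ := mem_graph_pComp.mp hxz
  exact hw y z hyz

theorem IsNormal.pKer_adjoint_subset (hN : T.IsNormal) : T†.pKer ⊆ T.pKer := by
  intro x hx
  have hx0 : (x, 0) ∈ (T.pComp T†).graph :=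
    mem_graph_pComp.mpr ⟨0, mem_pKer_iff.mp hx, T.graph.zero_mem⟩
  rw [← hN.2.2, mem_graph_pComp] at hx0
  obtain ⟨y, hxy, hy0⟩ := hx0
  have hy : ⟪y, y⟫_ℂ = 0 := by
    rw [← (adjoint_isFormalAdjoint hN.2.1).inner_eq_of_mem_graph hy0 hxy, inner_zero_left]
  rw [inner_self_eq_zero.mp hy] at hxy
  exact mem_pKer_iff.mpr hxy

theorem IsQuasinormal.pKer_pComp_self_subset (hT : T.IsQuasinormal) :
    (T.pComp T).pKer ⊆ T.pKer := by
  intro x hx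
  have hx0 : (x, 0) ∈ (T†.pComp (T.pComp T)).graph :=
    mem_graph_pComp.mpr ⟨0, mem_pKer_iff.mp hx, T†.graph.zero_mem⟩
  rw [← hT.2.2, mem_graph_pComp] at hx0
  obtain ⟨u, hxu, hu0⟩ := hx0
  obtain ⟨y, hxy, hyu⟩ := mem_graph_pComp.mp hxu
  have hT' := adjoint_isFormalAdjoint hT.2.1
  have hu : ⟪u, u⟫_ℂ = 0 := by rw [hT'.inner_eq_of_mem_graph hyu hu0, inner_zero_right]
  rw [inner_self_eq_zero.mp hu] at hyu
  have hy : ⟪y, y⟫_ℂ = 0 := by rw [← hT'.inner_eq_of_mem_graph hyu hxy, inner_zero_left]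
  rw [inner_self_eq_zero.mp hy] at hxy
  exact mem_pKer_iff.mpr hxy

theorem isMAccretive_adjoint_pComp (hc : T.IsClosed) (hd : Dense (T.domain : Set H)) :
    (T†.pComp T).IsMAccretive := by
  refine ⟨fun x y => (adjoint_isFormalAdjoint hd).re_inner_nonneg_of_mem_graph_pComp,
    fun h => ?_⟩
  obtain ⟨x, y, z, w, hxy, hzw, hyz, hwx⟩ := exists_mem_graph_mem_adjoint_graph hc hd 0 (-h)
  obtain rfl : z = -y := eq_neg_of_add_eq_zero_right hyz
  obtain rfl : w = x - h := by rw [sub_eq_add_neg, ← hwx]; abel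
  refine ⟨x, mem_graph_pComp.mpr ⟨y, hxy, ?_⟩⟩
  simpa using T†.graph.neg_mem hzw

theorem isMAccretive_pComp_adjoint (hc : T.IsClosed) (hd : Dense (T.domain : Set H)) :
    (T.pComp T†).IsMAccretive := by
  refine ⟨fun x y => (adjoint_isFormalAdjoint hd).symm.re_inner_nonneg_of_mem_graph_pComp,
    fun h => ?_⟩
  obtain ⟨x, y, z, w, hxy, hzw, hyz, hwx⟩ := exists_mem_graph_mem_adjoint_graph hc hd h 0
  obtain rfl : w = x := sub_eq_zero.mp hwx
  obtain rfl : y = h - z := eq_sub_of_add_eq hyz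
  exact ⟨z, mem_graph_pComp.mpr ⟨w, hzw, hxy⟩⟩

theorem oneAddInv_pComp_adjoint_mem_graph (hA : (T†.pComp T).IsMAccretive)
    (hB : (T.pComp T†).IsMAccretive) {d e : H} (hde : (d, e) ∈ T.graph) :
    (hA.oneAddInv d, hB.oneAddInv e) ∈ T.graph := by
  obtain ⟨u, hxu, hud⟩ := mem_graph_pComp.mp (hA.oneAddInv_eq_iff.mp rfl)
  rwa [hB.oneAddInv_eq_iff.mpr (mem_graph_pComp.mpr ⟨_, hud, T.graph.sub_mem hde hxu⟩)]

theorem IsQuasinormal.oneAddInv_adjoint_pComp_mem_graph (hT : T.IsQuasinormal)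
    (hA : (T†.pComp T).IsMAccretive) {d e : H} (hde : (d, e) ∈ T.graph) :
    (hA.oneAddInv d, hA.oneAddInv e) ∈ T.graph := by
  obtain ⟨u, hxu, hud⟩ := mem_graph_pComp.mp (hA.oneAddInv_eq_iff.mp rfl)
  have hx : (hA.oneAddInv d, e - u) ∈ (T.pComp (T†.pComp T)).graph :=
    mem_graph_pComp.mpr ⟨_, mem_graph_pComp.mpr ⟨u, hxu, hud⟩, T.graph.sub_mem hde hxu⟩
  rw [hT.2.2, mem_graph_pComp] at hx
  obtain ⟨v, hxv, hve⟩ := hx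
  obtain ⟨u', hxu', hu'v⟩ := mem_graph_pComp.mp hxv
  obtain rfl : u' = u := T.mem_graph_snd_inj hxu' hxu rfl
  rwa [hA.oneAddInv_eq_iff.mpr (mem_graph_pComp.mpr ⟨v, hu'v, hve⟩)]

theorem IsQuasinormal.isNormal_of_pKer_adjoint_subset (hT : T.IsQuasinormal)
    (hker : T†.pKer ⊆ T.pKer) : T.IsNormal := by
  have hd := hT.2.1
  have hA := isMAccretive_adjoint_pComp hT.1 hd
  have hB := isMAccretive_pComp_adjoint hT.1 hd
  set R := LinearMap.range T.toFun
  have hAB : hA.oneAddInv = hB.oneAddInv := by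
    refine ContinuousLinearMap.ext_on (s := (R : Set H) ∪ Rᗮ) ?_ ?_
    · rw [Submodule.span_union, Submodule.span_eq, Submodule.span_eq]
      exact R.dense_sup_orthogonal
    · rintro _ (⟨d, rfl⟩ | hw)
      · exact T.mem_graph_snd_inj (hT.oneAddInv_adjoint_pComp_mem_graph hA (T.mem_graph d))
          (oneAddInv_pComp_adjoint_mem_graph hA hB (T.mem_graph d)) rfl
      · have hw' := orthogonal_range_subset_pKer_adjoint hd hw
        rw [hA.oneAddInv_eq_self (mem_graph_pComp.mpr ⟨0, mem_pKer_iff.mp (hker hw'),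
            T†.graph.zero_mem⟩), hB.oneAddInv_eq_self (mem_graph_pComp.mpr ⟨0,
            mem_pKer_iff.mp hw', T.graph.zero_mem⟩)]
  refine ⟨hT.1, hd, eq_of_eq_graph (Submodule.ext fun ⟨x, y⟩ => ?_)⟩
  rw [← add_sub_cancel_left x y, ← hA.oneAddInv_eq_iff, ← hB.oneAddInv_eq_iff, hAB]

end Hilbert

end LinearPMap

/-- a quasinormal operator with a normal power `Tⁿ`, `n ≥ 2`, is normal. -/
theorem statement_12 {H : Type*} [NormedAddCommGroup H] [InnerProductSpace ℂ H] [CompleteSpace H]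
    (T : H →ₗ.[ℂ] H) (hT : T.IsQuasinormal)
    (n : ℕ) (hn : 2 ≤ n) (hnorm : (T.pPow n).IsNormal) :
    T.IsNormal := by
  obtain ⟨m, rfl⟩ : ∃ m, n = m + 1 := ⟨n - 1, by omega⟩
  refine hT.isNormal_of_pKer_adjoint_subset fun x hx => ?_
  have hx' : x ∈ (T.pPow (m + 1))†.pKer :=
    pKer_adjoint_subset_pKer_adjoint_pComp hT.2.1 hnorm.2.1 hx
  exact pKer_pPow_subset hT.pKer_pComp_self_subset m (hnorm.pKer_adjoint_subset hx')
end

section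
/- Let T be a densely defined closed operator on a complex Hilbert space satisfying T*T = T². Then T is self-adjoint. -/
/-!
Projecting `(h, 0)` onto the closed graph of `T` gives bounded operators `B = (1 + T†T)⁻¹` and
`C = T B` with `(C h, h - B h)` in the graph of `T†`; `B` is self-adjoint and `C†C = B - B²`.
The hypothesis says that `T†` and `T` agree, domains included, on the range of `T`. It upgrades
the last fact to `T C = 1 - B` and yields `B T ⊆ C`, whence `C² = B - B² = C†C`. In a C⋆-algebra
`a⋆a = a²` forces `a⋆ = a` (for `n = a - a⋆` one gets `a⋆n = 0`, then `a n = 0`, then `n⋆n = 0`),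
so `C` is self-adjoint. Then every pair `(x, y)` in the graph of `T` or of `T†` satisfies
`B y = C x` and `x - B x = C y`, so it splits as `(B x, C x) + (C y, y - B y)`, and both summands
lie in both graphs.
-/

open LinearPMap

set_option linter.unusedSectionVars false

theorem IsSelfAdjoint.of_star_mul_self_eq_mul_self {A : Type*} [NonUnitalNormedRing A]
    [StarRing A] [CStarRing A] {a : A} (h : star a * a = a * a) : IsSelfAdjoint a := by
  have h' : star a * star a = star a * a := by
    simpa only [star_mul, star_star] using (congrArg star h).symm
  set n := a - star a
  have han : star a * n = 0 := by simp only [n, mul_sub, h', sub_self]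
  have hna : a * n = 0 := by
    rw [← CStarRing.star_mul_self_eq_zero_iff]
    calc star (a * n) * (a * n) = star (star a * n) * (a * n) := by
          rw [star_mul, star_mul, star_star, mul_assoc, ← mul_assoc (star a), h]
          simp only [mul_assoc]
      _ = 0 := by rw [han, star_zero, zero_mul]
  have hn : star n * n = 0 := by
    simp only [n, star_sub, star_star, sub_mul, hna, han, sub_zero]
  exact (sub_eq_zero.mp ((CStarRing.star_mul_self_eq_zero_iff n).mp hn)).symm

theorem Submodule.mk_mem_of_apply_eq_of_sub_apply_eq {𝕜 E : Type*} [Ring 𝕜] [AddCommGroup E]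
    [Module 𝕜 E] {S : Submodule 𝕜 (E × E)} {B C : E →ₗ[𝕜] E} (hS : ∀ h, (B h, C h) ∈ S)
    (hS' : ∀ h, (C h, h - B h) ∈ S) {x y : E} (hBy : B y = C x) (hCy : x - B x = C y) :
    (x, y) ∈ S := by
  convert add_mem (hS x) (hS' y) using 1
  rw [Prod.mk_add_mk, ← hCy, hBy, add_sub_cancel, add_sub_cancel]

section Composition

variable {H : Type*} [NormedAddCommGroup H] [NormedSpace ℂ H]

theorem LinearPMap.mem_graph_pComp_s17 {g f : H →ₗ.[ℂ] H} (x : f.domain) (hx : f x ∈ g.domain) :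
    ((x : H), g ⟨f x, hx⟩) ∈ (g.pComp f).graph := by
  refine (mem_graph_iff _).mpr ⟨⟨x, x, hx, rfl⟩, rfl, ?_⟩
  have : (Submodule.equivMapOfInjective f.domain.subtype (Submodule.injective_subtype _)
      (g.domain.comap f.toFun)).symm ⟨x, x, hx, rfl⟩ = ⟨x, hx⟩ :=
    (LinearEquiv.symm_apply_eq _).mpr rfl
  show g.toFun (f.toFun.restrict (p := g.domain.comap f.toFun) (q := g.domain) (fun _ h => h)
    ((Submodule.equivMapOfInjective f.domain.subtype (Submodule.injective_subtype _)
      (g.domain.comap f.toFun)).symm ⟨x, x, hx, rfl⟩)) = _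
  rw [this]
  rfl

theorem LinearPMap.mem_graph_pComp_iff {g f : H →ₗ.[ℂ] H} {x z : H} :
    (x, z) ∈ (g.pComp f).graph ↔ ∃ y, (x, y) ∈ f.graph ∧ (y, z) ∈ g.graph := by
  constructor
  · intro h
    obtain ⟨⟨_, x', hx', rfl⟩, rfl, rfl⟩ := (mem_graph_iff _).mp h
    exact ⟨f x', f.mem_graph x', (g.pComp f).mem_graph_snd_inj (mem_graph_pComp_s17 x' hx') h rfl ▸
      g.mem_graph ⟨f x', hx'⟩⟩
  · rintro ⟨y, hxy, hyz⟩
    obtain ⟨x', rfl, rfl⟩ := (mem_graph_iff _).mp hxy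
    obtain ⟨y', hy', rfl⟩ := (mem_graph_iff _).mp hyz
    obtain ⟨y', rfl⟩ : ∃ hx : f x' ∈ g.domain, y' = ⟨f x', hx⟩ :=
      ⟨(show (y' : H) = f x' from hy') ▸ y'.2, Subtype.ext hy'⟩
    exact mem_graph_pComp_s17 x' _

end Composition

section GraphResolvent

variable {𝕜 E F : Type*} [RCLike 𝕜] [NormedAddCommGroup E] [InnerProductSpace 𝕜 E]
  [NormedAddCommGroup F] [InnerProductSpace 𝕜 F] [CompleteSpace E] {T : E →ₗ.[𝕜] F}

namespace LinearPMap

theorem mem_graph_adjoint_iff (hT : Dense (T.domain : Set E)) {x : F} {y : E} :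
    (x, y) ∈ T†.graph ↔ ∀ a b, (a, b) ∈ T.graph → inner 𝕜 y a = inner 𝕜 x b := by
  simp only [adjoint_graph_eq_graph_adjoint hT, Submodule.mem_adjoint_iff, sub_eq_zero]
  refine forall₃_congr fun a b _ => ?_
  rw [← inner_conj_symm, ← inner_conj_symm a, (starRingEnd 𝕜).injective.eq_iff, eq_comm]

/-- `B = (1 + T†T)⁻¹` and `C = T B`, the two components of the orthogonal projection of `(h, 0)`
onto the graph of `T`. -/
structure IsGraphResolvent (T : E →ₗ.[𝕜] F) (B : E →L[𝕜] E) (C : E →L[𝕜] F) : Prop where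
  fst_mem_graph (h : E) : (B h, C h) ∈ T.graph
  snd_mem_graph_adjoint (h : E) : (C h, h - B h) ∈ T†.graph

theorem exists_isGraphResolvent [CompleteSpace F] (hT : Dense (T.domain : Set E))
    (hclosed : T.IsClosed) : ∃ B C, T.IsGraphResolvent B C := by
  let e := WithLp.prodContinuousLinearEquiv 2 𝕜 E F
  let G : Submodule 𝕜 (WithLp 2 (E × F)) := T.graph.comap (e : WithLp 2 (E × F) →ₗ[𝕜] E × F)
  have : CompleteSpace G := (hclosed.preimage e.continuous).completeSpace_coe
  let P : E →L[𝕜] E × F := e ∘L G.starProjection ∘L e.symm ∘L .inl 𝕜 E F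
  refine ⟨.fst 𝕜 E F ∘L P, .snd 𝕜 E F ∘L P, fun h => G.starProjection_apply_mem _, fun h => ?_⟩
  refine (mem_graph_adjoint_iff hT).mpr fun a b hab => ?_
  set p := G.starProjection (WithLp.toLp 2 (h, 0))
  have horth := G.starProjection_inner_eq_zero (WithLp.toLp 2 (h, 0)) (WithLp.toLp 2 (a, b)) hab
  simp only [WithLp.prod_inner_apply, WithLp.ofLp_sub, Prod.fst_sub, Prod.snd_sub, zero_sub,
    inner_neg_left] at horth
  change inner 𝕜 (h - p.ofLp.1) a = inner 𝕜 p.ofLp.2 b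
  linear_combination horth

namespace IsGraphResolvent

variable {B : E →L[𝕜] E} {C : E →L[𝕜] F}

theorem inner_snd_snd (hT : Dense (T.domain : Set E)) (hBC : T.IsGraphResolvent B C) (h k : E) :
    inner 𝕜 (C h) (C k) = inner 𝕜 (h - B h) (B k) :=
  ((mem_graph_adjoint_iff hT).mp (hBC.snd_mem_graph_adjoint h) _ _ (hBC.fst_mem_graph k)).symm

theorem isSelfAdjoint_fst (hT : Dense (T.domain : Set E)) (hBC : T.IsGraphResolvent B C) :
    IsSelfAdjoint B := by
  refine ContinuousLinearMap.isSelfAdjoint_iff_isSymmetric.mpr fun h k => ?_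
  change inner 𝕜 (B h) k = inner 𝕜 h (B k)
  have hhk := hBC.inner_snd_snd hT h k
  have hkh := congrArg (starRingEnd 𝕜) (hBC.inner_snd_snd hT k h)
  simp only [inner_sub_left, (starRingEnd 𝕜).map_sub, inner_conj_symm] at hhk hkh
  linear_combination hhk - hkh

theorem snd_adjoint_comp_snd [CompleteSpace F] (hT : Dense (T.domain : Set E))
    (hBC : T.IsGraphResolvent B C) : C.adjoint ∘L C = B - B ∘L B := by
  ext h
  refine ext_inner_left 𝕜 fun k => ?_
  have hB : ∀ x y, inner 𝕜 (B x) y = inner 𝕜 x (B y) := (hBC.isSelfAdjoint_fst hT).isSymmetric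
  rw [ContinuousLinearMap.comp_apply, ContinuousLinearMap.adjoint_inner_right, FunLike.coe_sub,
    Pi.sub_apply, ContinuousLinearMap.comp_apply, inner_snd_snd hT hBC, inner_sub_left,
    inner_sub_right, hB]

theorem fst_apply_add_eq (hT : Dense (T.domain : Set E)) (hBC : T.IsGraphResolvent B C)
    {u w : E} {v : F} (huv : (u, v) ∈ T.graph) (hvw : (v, w) ∈ T†.graph) : B (u + w) = u := by
  set h := u + w with hh
  have hd : (B h - u, C h - v) ∈ T.graph := sub_mem (hBC.fst_mem_graph h) huv
  have hd' : (C h - v, h - B h - w) ∈ T†.graph := sub_mem (hBC.snd_mem_graph_adjoint h) hvw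
  -- `d = B h - u` satisfies `d + T†T d = 0`, hence `‖d‖² + ‖T d‖² = 0`.
  have hinner := (mem_graph_adjoint_iff hT).mp hd' _ _ hd
  rw [show h - B h - w = -(B h - u) by rw [hh]; abel, inner_neg_left, neg_eq_iff_eq_neg,
    ← add_eq_zero_iff_eq_neg, inner_self_eq_norm_sq_to_K, inner_self_eq_norm_sq_to_K] at hinner
  norm_cast at hinner
  have : ‖B h - u‖ = 0 := by nlinarith [norm_nonneg (B h - u), sq_nonneg ‖C h - v‖]
  exact sub_eq_zero.mp (norm_eq_zero.mp this)

end IsGraphResolvent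

end LinearPMap

end GraphResolvent

section AdjointCompSelfEqSq

variable {𝕜 E : Type*} [RCLike 𝕜] [NormedAddCommGroup E] [InnerProductSpace 𝕜 E]
  [CompleteSpace E] {T : E →ₗ.[𝕜] E} {B C : E →L[𝕜] E}

namespace LinearPMap

/-- `T†T = T²`, domains included, stated on graphs. -/
def AdjointCompSelfEqSq (T : E →ₗ.[𝕜] E) : Prop :=
  ∀ ⦃x y z : E⦄, (x, y) ∈ T.graph → ((y, z) ∈ T†.graph ↔ (y, z) ∈ T.graph)

namespace IsGraphResolvent

theorem snd_mem_graph (hsq : T.AdjointCompSelfEqSq) (hBC : T.IsGraphResolvent B C) (h : E) :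
    (C h, h - B h) ∈ T.graph :=
  (hsq (hBC.fst_mem_graph h)).mp (hBC.snd_mem_graph_adjoint h)

theorem fst_apply_snd_eq (hT : Dense (T.domain : Set E)) (hsq : T.AdjointCompSelfEqSq)
    (hBC : T.IsGraphResolvent B C) {x y : E} (hxy : (x, y) ∈ T.graph) : B y = C x := by
  have hC := hBC.snd_mem_graph hsq x
  have h : (x - B x, y - C x) ∈ T†.graph := (hsq hC).mpr (sub_mem hxy (hBC.fst_mem_graph x))
  simpa only [add_sub_cancel] using hBC.fst_apply_add_eq hT hC h

theorem snd_comp_snd (hT : Dense (T.domain : Set E)) (hsq : T.AdjointCompSelfEqSq)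
    (hBC : T.IsGraphResolvent B C) : C ∘L C = B - B ∘L B := by
  ext h
  exact T.mem_graph_snd_inj (hBC.fst_mem_graph (C h)) (hBC.snd_mem_graph hsq (B h))
    (hBC.fst_apply_snd_eq hT hsq (hBC.fst_mem_graph h))

theorem isSelfAdjoint_snd (hT : Dense (T.domain : Set E)) (hsq : T.AdjointCompSelfEqSq)
    (hBC : T.IsGraphResolvent B C) : IsSelfAdjoint C :=
  .of_star_mul_self_eq_mul_self <|
    (hBC.snd_adjoint_comp_snd hT).trans (hBC.snd_comp_snd hT hsq).symm

theorem fst_mem_graph_adjoint (hT : Dense (T.domain : Set E)) (hsq : T.AdjointCompSelfEqSq)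
    (hBC : T.IsGraphResolvent B C) (h : E) : (B h, C h) ∈ T†.graph := by
  refine (mem_graph_adjoint_iff hT).mpr fun a b hab => ?_
  calc inner 𝕜 (C h) a = inner 𝕜 h (C a) := (hBC.isSelfAdjoint_snd hT hsq).isSymmetric h a
    _ = inner 𝕜 h (B b) := by rw [hBC.fst_apply_snd_eq hT hsq hab]
    _ = inner 𝕜 (B h) b := ((hBC.isSelfAdjoint_fst hT).isSymmetric h b).symm

theorem graph_le_graph_adjoint (hT : Dense (T.domain : Set E)) (hsq : T.AdjointCompSelfEqSq)
    (hBC : T.IsGraphResolvent B C) : T.graph ≤ T†.graph := by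
  rintro ⟨x, y⟩ hxy
  have hBy := hBC.fst_apply_snd_eq hT hsq hxy
  exact Submodule.mk_mem_of_apply_eq_of_sub_apply_eq (B := B) (C := C)
    (hBC.fst_mem_graph_adjoint hT hsq) hBC.snd_mem_graph_adjoint hBy
    (T.mem_graph_snd_inj (hBC.snd_mem_graph hsq x) (hBC.fst_mem_graph y) hBy.symm)

theorem graph_adjoint_le_graph (hT : Dense (T.domain : Set E)) (hsq : T.AdjointCompSelfEqSq)
    (hBC : T.IsGraphResolvent B C) : T†.graph ≤ T.graph := by
  rintro ⟨y, z⟩ hyz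
  have hCy : C y = B z := ext_inner_right 𝕜 fun k =>
    calc inner 𝕜 (C y) k = inner 𝕜 y (C k) := (hBC.isSelfAdjoint_snd hT hsq).isSymmetric y k
      _ = inner 𝕜 z (B k) := ((mem_graph_adjoint_iff hT).mp hyz _ _ (hBC.fst_mem_graph k)).symm
      _ = inner 𝕜 (B z) k := ((hBC.isSelfAdjoint_fst hT).isSymmetric z k).symm
  exact Submodule.mk_mem_of_apply_eq_of_sub_apply_eq (B := B) (C := C)
    hBC.fst_mem_graph (hBC.snd_mem_graph hsq) hCy.symm
    (T.mem_graph_snd_inj (hBC.snd_mem_graph hsq y) (hBC.fst_mem_graph z) hCy)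

end IsGraphResolvent

theorem adjoint_eq_self_of_adjointCompSelfEqSq (hT : Dense (T.domain : Set E))
    (hclosed : T.IsClosed) (hsq : T.AdjointCompSelfEqSq) : T† = T := by
  obtain ⟨B, C, hBC⟩ := exists_isGraphResolvent hT hclosed
  exact eq_of_eq_graph <|
    (hBC.graph_adjoint_le_graph hT hsq).antisymm (hBC.graph_le_graph_adjoint hT hsq)

end LinearPMap

end AdjointCompSelfEqSq

theorem LinearPMap.adjointCompSelfEqSq_of_adjoint_pComp_eq {H : Type*} [NormedAddCommGroup H]
    [InnerProductSpace ℂ H] [CompleteSpace H] {T : H →ₗ.[ℂ] H}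
    (heq : T†.pComp T = T.pComp T) : T.AdjointCompSelfEqSq := by
  have key : ∀ {S S' : H →ₗ.[ℂ] H}, S.pComp T = S'.pComp T →
      ∀ ⦃x y z : H⦄, (x, y) ∈ T.graph → (y, z) ∈ S.graph → (y, z) ∈ S'.graph := by
    intro S S' hS x y z hxy hyz
    obtain ⟨y', hxy', hy'z⟩ := mem_graph_pComp_iff.mp (hS ▸ mem_graph_pComp_iff.mpr ⟨y, hxy, hyz⟩)
    rwa [T.mem_graph_snd_inj hxy hxy' rfl]
  exact fun x y z hxy => ⟨key heq hxy, key heq.symm hxy⟩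

/-- a densely defined closed operator with `T*T = T²` is self-adjoint. -/
theorem statement_17 {H : Type*} [NormedAddCommGroup H] [InnerProductSpace ℂ H] [CompleteSpace H]
    (T : H →ₗ.[ℂ] H) (hdense : Dense (T.domain : Set H)) (hclosed : T.IsClosed)
    (heq : T.adjoint.pComp T = T.pComp T) :
    T.adjoint = T :=
  adjoint_eq_self_of_adjointCompSelfEqSq hdense hclosed
    (adjointCompSelfEqSq_of_adjoint_pComp_eq heq)
end
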